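/- (Lemma 4) Let o_0, …, o_n be a trip schedule whose points each lie in some subgraph of the partition, let l^s lie in some subgraph, and let 0 ≤ i < n. If dis↓(o_i, l^s) + dis↓(l^s, o_{i+1}) − dist(o_i, o_{i+1}) > sd[i+1], then the actual incremental distance Δd(o_i, l^s, o_{i+1}) = dist(o_i, l^s) + dist(l^s, o_{i+1}) − dist(o_i, o_{i+1}) also exceeds sd[i+1]; consequently there exists a position x with i+1 ≤ x ≤ n whose surplus is exceeded, i.e., sur(x) < Δd(o_i, l^s, o_{i+1}). Hence the rider cannot be picked up at the i-th point. -/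

import Mathlib

/-!
Every bridge-based lower bound `dis↓(u, v)` is at most `dist u v`: a shortest path between
different subgraphs runs through some bridge pair `b, b'`, and each of the three summands of
`dis↓(u, v)` is a minimum that the corresponding leg of that path dominates. Hence the real
detour is at least the lower-bound detour, and it exceeds the slack, which, being a minimum
over the finitely many positions `i + 1, …, n`, is the surplus of one of them.
-/

open scoped Classical

/-- Lower bound distance `dis(G_i, G_j)` between two subgraphs: the minimum
shortest-path distance over all bridge-vertex pairs (0 if `i = j`). -/
noncomputable def disG {X ι : Type*} [MetricSpace X] (B : ι → Finset X) (i j : ι) : ℝ :=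
  if i = j then 0 else sInf {d : ℝ | ∃ b ∈ B i, ∃ b' ∈ B j, d = dist b b'}

/-- Lower bound distance `dis↓(u)` from a vertex `u` of subgraph `i` to its
nearest bridge vertex of that subgraph. -/
noncomputable def disDown {X ι : Type*} [MetricSpace X] (B : ι → Finset X) (i : ι) (u : X) : ℝ :=
  sInf {d : ℝ | ∃ b ∈ B i, d = dist u b}

/-- Lower bound distance `dis↓(u, G_j)` between a vertex `u ∈ V i` and the subgraph `G_j`. -/
noncomputable def disVG {X ι : Type*} [MetricSpace X] (B : ι → Finset X) (i j : ι) (u : X) : ℝ :=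
  if i = j then 0
  else disG B i j + (if u ∈ B i then 0 else disDown B i u)

/-- Lower bound distance `dis↓(u, v)` between vertices `u ∈ V i` and `v ∈ V j`. -/
noncomputable def disVV {X ι : Type*} [MetricSpace X] (B : ι → Finset X) (i j : ι) (u v : X) : ℝ :=
  if i = j then 0
  else disG B i j + (if u ∈ B i then 0 else disDown B i u)
    + (if v ∈ B j then 0 else disDown B j v)

/-- Slack distance `sd[k] = min_{k ≤ x ≤ n} sur(x)` of a trip schedule with
surplus values `sur`. -/
noncomputable def slack (sur : ℕ → ℝ) (n k : ℕ) : ℝ := sInf (sur '' Set.Icc k n)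

section BridgeBounds

variable {X ι : Type*} [MetricSpace X] (B : ι → Finset X)

theorem disG_le_dist (i j : ι) {b b' : X} (hb : b ∈ B i) (hb' : b' ∈ B j) :
    disG B i j ≤ dist b b' := by
  unfold disG
  split_ifs
  · exact dist_nonneg
  · refine csInf_le ⟨0, ?_⟩ ⟨b, hb, b', hb', rfl⟩
    rintro _ ⟨_, _, _, _, rfl⟩
    exact dist_nonneg

theorem disDown_le_dist (i : ι) (u : X) {b : X} (hb : b ∈ B i) :
    disDown B i u ≤ dist u b := by
  refine csInf_le ⟨0, ?_⟩ ⟨b, hb, rfl⟩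
  rintro _ ⟨_, _, rfl⟩
  exact dist_nonneg

theorem ite_mem_disDown_le_dist (i : ι) (u : X) {b : X} (hb : b ∈ B i) :
    (if u ∈ B i then 0 else disDown B i u) ≤ dist u b := by
  split_ifs
  · exact dist_nonneg
  · exact disDown_le_dist B i u hb

theorem disVV_le_dist (V : ι → Set X)
    (hpass : ∀ i j : ι, i ≠ j → ∀ u ∈ V i, ∀ v ∈ V j,
      ∃ b ∈ B i, ∃ b' ∈ B j, dist u v = dist u b + dist b b' + dist b' v)
    {i j : ι} {u v : X} (hu : u ∈ V i) (hv : v ∈ V j) :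
    disVV B i j u v ≤ dist u v := by
  by_cases hij : i = j
  · rw [disVV, if_pos hij]
    exact dist_nonneg
  rw [disVV, if_neg hij]
  obtain ⟨b, hb, b', hb', hpath⟩ := hpass i j hij u hu v hv
  linarith [disG_le_dist B i j hb hb', ite_mem_disDown_le_dist B i u hb,
    (ite_mem_disDown_le_dist B j v hb').trans_eq (dist_comm v b')]

end BridgeBounds

theorem exists_eq_slack (sur : ℕ → ℝ) {n k : ℕ} (hkn : k ≤ n) :
    ∃ x, k ≤ x ∧ x ≤ n ∧ sur x = slack sur n k := by
  have hne : (sur '' Set.Icc k n).Nonempty := ⟨sur k, k, ⟨le_rfl, hkn⟩, rfl⟩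
  obtain ⟨x, ⟨hkx, hxn⟩, hx⟩ := hne.csInf_mem ((Set.finite_Icc k n).image sur)
  exact ⟨x, hkx, hxn, hx⟩

theorem prune_source_insertion_general {X ι : Type*} [MetricSpace X]
    (V : ι → Set X) (B : ι → Finset X)
    (hpass : ∀ i j : ι, i ≠ j → ∀ u ∈ V i, ∀ v ∈ V j,
      ∃ b ∈ B i, ∃ b' ∈ B j, dist u v = dist u b + dist b b' + dist b' v)
    (o : ℕ → X) (n : ℕ) (idx : ℕ → ι) (ho : ∀ k, k ≤ n → o k ∈ V (idx k))
    (sur : ℕ → ℝ)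
    {is : ι} {ls : X} (hls : ls ∈ V is)
    {i : ℕ} (hi : i < n)
    (h : disVV B (idx i) is (o i) ls + disVV B is (idx (i + 1)) ls (o (i + 1))
        - dist (o i) (o (i + 1)) > slack sur n (i + 1)) :
    dist (o i) ls + dist ls (o (i + 1)) - dist (o i) (o (i + 1))
        > slack sur n (i + 1) ∧
      ∃ x, i + 1 ≤ x ∧ x ≤ n ∧
        sur x < dist (o i) ls + dist ls (o (i + 1)) - dist (o i) (o (i + 1)) := by
  have hin := disVV_le_dist B V hpass (ho i hi.le) hls
  have hout := disVV_le_dist B V hpass hls (ho (i + 1) hi)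
  have hexceeds : dist (o i) ls + dist ls (o (i + 1)) - dist (o i) (o (i + 1))
      > slack sur n (i + 1) := by linarith
  obtain ⟨x, hix, hxn, hx⟩ := exists_eq_slack sur (Nat.succ_le_of_lt hi)
  exact ⟨hexceeds, x, hix, hxn, hx ▸ hexceeds⟩

/-- Lemma 4: if the lower-bound incremental distance of
inserting `l^s` between `o_i` and `o_{i+1}` exceeds the slack `sd[i+1]`, then
the actual incremental distance `Δd(o_i, l^s, o_{i+1})` also exceeds
`sd[i+1]`, and some position `x` with `i+1 ≤ x ≤ n` has its surplus exceeded;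
hence the rider cannot be picked up at the `i`-th point. -/
theorem prune_source_insertion {X ι : Type*} [MetricSpace X] [Nontrivial ι]
    (V : ι → Set X) (B : ι → Finset X)
    (hcover : ∀ x : X, ∃ i, x ∈ V i)
    (hdisj : ∀ i j : ι, i ≠ j → Disjoint (V i) (V j))
    (hBne : ∀ i, (B i).Nonempty)
    (hBV : ∀ i, (B i : Set X) ⊆ V i)
    (hpass : ∀ i j : ι, i ≠ j → ∀ u ∈ V i, ∀ v ∈ V j,
      ∃ b ∈ B i, ∃ b' ∈ B j, dist u v = dist u b + dist b b' + dist b' v)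
    (o : ℕ → X) (n : ℕ) (idx : ℕ → ι) (ho : ∀ k, k ≤ n → o k ∈ V (idx k))
    (sur : ℕ → ℝ)
    {is : ι} {ls : X} (hls : ls ∈ V is)
    {i : ℕ} (hi : i < n)
    (h : disVV B (idx i) is (o i) ls + disVV B is (idx (i + 1)) ls (o (i + 1))
        - dist (o i) (o (i + 1)) > slack sur n (i + 1)) :
    dist (o i) ls + dist ls (o (i + 1)) - dist (o i) (o (i + 1))
        > slack sur n (i + 1) ∧
      ∃ x, i + 1 ≤ x ∧ x ≤ n ∧
        sur x < dist (o i) ls + dist ls (o (i + 1)) - dist (o i) (o (i + 1)) :=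
  prune_source_insertion_general V B hpass o n idx ho sur hls hi h
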